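/- arXiv:2304.07656 — 6 statements merged into one kernel-verified Lean document; each statement's English description precedes it below -/
import Mathlib

section
/- Let p be a prime. The pair Z_p ≤ S_p (the cyclic group of order p generated by a p-cycle inside the symmetric group on p letters) has the homomorphism extension property: every homomorphism from the cyclic subgroup of order p to any symmetric group S_n extends to a homomorphism from S_p to S_n. -/
/-! Since `p` is prime, the image `σ` of the generating `p`-cycle `c` satisfies `σ ^ p = 1`,
so `σ` is a product of disjoint `p`-cycles. Each of them is conjugate to a copy of `c` placed on its
support, which yields a homomorphism `S_p → S_n` sending `c` to that cycle and supported on it.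
Homomorphisms with disjoint supports commute elementwise, so their pointwise product is again a
homomorphism; it sends `c` to `σ` and hence agrees with `φ` on all of `⟨c⟩`. -/

open Equiv Equiv.Perm Finset

namespace Equiv.Perm

variable {G : Type*} [Group G] {β : Type*} [Fintype β] [DecidableEq β]

theorem orderOf_finRotate {n : ℕ} (hn : 2 ≤ n) : orderOf (finRotate n) = n := by
  rw [(isCycle_finRotate_of_le hn).orderOf, support_finRotate_of_le hn, card_univ,
    Fintype.card_fin]

def IsSupportedImage (g : G) (σ : Perm β) : Prop :=
  ∃ F : G →* Perm β, F g = σ ∧ ∀ x, (F x).support ⊆ σ.support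

theorem isSupportedImage_one (g : G) : IsSupportedImage g (1 : Perm β) :=
  ⟨1, rfl, fun _ => by simp⟩

theorem IsSupportedImage.mul_of_disjoint {g : G} {σ τ : Perm β} (hσ : IsSupportedImage g σ)
    (hτ : IsSupportedImage g τ) (hd : Disjoint σ τ) : IsSupportedImage g (σ * τ) := by
  obtain ⟨F₁, hF₁g, hF₁⟩ := hσ
  obtain ⟨F₂, hF₂g, hF₂⟩ := hτ
  have hcomm : ∀ x y, Commute (F₁ x) (F₂ y) := fun x y =>
    (disjoint_iff_disjoint_support.mpr
      ((disjoint_iff_disjoint_support.mp hd).mono (hF₁ x) (hF₂ y))).commute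
  refine ⟨(F₁.noncommCoprod F₂ hcomm).comp ((MonoidHom.id G).prod (MonoidHom.id G)),
    by simp [hF₁g, hF₂g], fun x => ?_⟩
  rw [hd.support_mul]
  exact (support_mul_le _ _).trans (sup_le_sup (hF₁ x) (hF₂ x))

theorem IsCycle.isSupportedImage_finRotate {σ : Perm β} {n : ℕ} (hσ : σ.IsCycle)
    (hn : #σ.support = n + 2) : IsSupportedImage (finRotate (n + 2)) σ := by
  let e : Fin (n + 2) ≃ {x // x ∈ σ.support} :=
    (Fintype.equivFinOfCardEq (by rw [Fintype.card_coe, hn])).symm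
  have hρ : ((finRotate (n + 2)).extendDomain e).support = univ.map e.asEmbedding := by
    rw [support_extend_domain, support_finRotate]
  obtain ⟨c, hc⟩ := _root_.isConj_iff.mp ((isCycle_finRotate.extendDomain e).isConj hσ
    (by rw [hρ, card_map, card_univ, Fintype.card_fin, hn]))
  refine ⟨(MulAut.conj c).toMonoidHom.comp (extendDomainHom e), by simpa using hc, fun τ => ?_⟩
  have hσ_supp : σ.support = (univ.map e.asEmbedding).map c.toEmbedding := by
    rw [← hρ, ← support_conj, hc]
  simp only [MonoidHom.coe_comp, Function.comp_apply, MulEquiv.coe_toMonoidHom,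
    MulAut.conj_apply, extendDomainHom_apply, support_conj, support_extend_domain, hσ_supp]
  exact map_subset_map.mpr (map_subset_map.mpr (subset_univ _))

theorem isSupportedImage_finRotate_of_pow_eq_one {p : ℕ} (hp : p.Prime) (σ : Perm β)
    (hσ : σ ^ p = 1) : IsSupportedImage (finRotate p) σ := by
  have := Fact.mk hp
  obtain ⟨n, rfl⟩ : ∃ n, p = n + 2 := ⟨p - 2, by have := hp.two_le; omega⟩
  induction σ using cycle_induction_on with
  | base_one => exact isSupportedImage_one _
  | base_cycles σ hc =>
    exact hc.isSupportedImage_finRotate (hc.orderOf ▸ orderOf_eq_prime hσ hc.ne_one)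
  | induction_disjoint σ τ hd _ ihσ ihτ =>
    rw [hd.commute.mul_pow] at hσ
    obtain ⟨hσ, hτ⟩ := (hd.pow_disjoint_pow _ _).mul_eq_one_iff.mp hσ
    exact (ihσ hσ).mul_of_disjoint (ihτ hτ) hd

end Equiv.Perm

/-- Let `p` be a prime. The pair `Z_p ≤ S_p`, where `Z_p` is the cyclic subgroup of
order `p` generated by a `p`-cycle, has the homomorphism extension property: every
homomorphism from this cyclic subgroup to any symmetric group `S_n` extends to a
homomorphism `S_p → S_n`. -/
theorem stmt_5 (p : ℕ) (hp : p.Prime) (n : ℕ)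
    (φ : (Subgroup.zpowers (finRotate p)) →* Equiv.Perm (Fin n)) :
    ∃ φbar : Equiv.Perm (Fin p) →* Equiv.Perm (Fin n),
      ∀ h : Subgroup.zpowers (finRotate p), φbar (h : Equiv.Perm (Fin p)) = φ h := by
  set c : Subgroup.zpowers (finRotate p) := ⟨finRotate p, Subgroup.mem_zpowers _⟩
  have hc : c ^ p = 1 := by
    have := pow_orderOf_eq_one (finRotate p)
    rw [orderOf_finRotate hp.two_le] at this
    exact Subtype.ext this
  obtain ⟨F, hF, -⟩ :=
    isSupportedImage_finRotate_of_pow_eq_one hp (φ c) (by rw [← map_pow, hc, map_one])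
  refine ⟨F, Subgroup.forall_zpowers.mpr fun m => ?_⟩
  rw [map_zpow, hF, ← map_zpow]
  rfl
end

section
/- Let p be a prime with p ≥ 3. The cyclic subgroup of order p generated by a p-cycle in S_p is not a retract of S_p; equivalently, it has no normal complement in S_p. -/
lemma aux_orderOf_finRotate (p : ℕ) (hp3 : 3 ≤ p) : orderOf (finRotate p) = p := by
  have h2 : 2 ≤ p := by omega
  rw [← Equiv.Perm.lcm_cycleType, cycleType_finRotate_of_le h2]
  simp

lemma aux_finRotate_ne_one (p : ℕ) (hp3 : 3 ≤ p) : finRotate p ≠ 1 := by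
  intro h
  have := aux_orderOf_finRotate p hp3
  rw [h, orderOf_one] at this
  omega

lemma aux_eq_one_of_two_p {G : Type*} [Group G] (p : ℕ) (hodd : Odd p) (q : G)
    (h2 : q ^ 2 = 1) (hpth : q ^ p = 1) : q = 1 := by
  rw [← orderOf_eq_one_iff]
  have hd : orderOf q ∣ Nat.gcd 2 p :=
    Nat.dvd_gcd (orderOf_dvd_of_pow_eq_one h2) (orderOf_dvd_of_pow_eq_one hpth)
  have hcop : Nat.gcd 2 p = 1 := Nat.coprime_two_left.mpr hodd
  rw [hcop] at hd
  exact Nat.eq_one_of_dvd_one hd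

/-- For a prime `p ≥ 3`, the cyclic subgroup of order `p` generated by a `p`-cycle in
`S_p` is not a retract of `S_p`; equivalently, it has no normal complement in `S_p`. -/
theorem stmt_6 (p : ℕ) (hp : p.Prime) (hp3 : 3 ≤ p) :
    (¬∃ γ : Equiv.Perm (Fin p) →* (Subgroup.zpowers (finRotate p)),
        ∀ h : Subgroup.zpowers (finRotate p), γ (h : Equiv.Perm (Fin p)) = h) ∧
    ¬∃ K : Subgroup (Equiv.Perm (Fin p)), K.Normal ∧
        K ⊓ Subgroup.zpowers (finRotate p) = ⊥ ∧
        ∀ g : Equiv.Perm (Fin p), ∃ k ∈ K, ∃ h ∈ Subgroup.zpowers (finRotate p),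
          g = k * h := by
  have hc1 : (finRotate p) ^ p = 1 := by
    have h := pow_orderOf_eq_one (finRotate p)
    rwa [aux_orderOf_finRotate p hp3] at h
  have hodd : Odd p := hp.odd_of_ne_two (by omega)
  have hmem : ∀ x : Equiv.Perm (Fin p), x ∈ Subgroup.zpowers (finRotate p) → x ^ p = 1 := by
    rintro x ⟨m, rfl⟩
    show (finRotate p ^ m) ^ p = 1
    rw [← zpow_natCast, ← zpow_mul, mul_comm, zpow_mul, zpow_natCast, hc1, one_zpow]
  constructor
  · rintro ⟨γ, hγ⟩
    have hexp : ∀ x : Subgroup.zpowers (finRotate p), x ^ p = 1 := by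
      intro x
      apply Subtype.ext
      push_cast
      exact hmem x x.2
    have hswap : ∀ σ : Equiv.Perm (Fin p), σ.IsSwap → γ σ = 1 := by
      rintro σ ⟨a, b, hab, rfl⟩
      refine aux_eq_one_of_two_p p hodd _ ?_ (hexp _)
      rw [sq, ← map_mul, Equiv.swap_mul_self, map_one]
    have htop : ∀ g : Equiv.Perm (Fin p), γ g = 1 := by
      intro g
      have hg : g ∈ Subgroup.closure {σ : Equiv.Perm (Fin p) | σ.IsSwap} := by
        rw [Equiv.Perm.closure_isSwap]; trivial
      refine Subgroup.closure_induction (fun x hx => hswap x hx) (map_one γ)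
        (fun x y _ _ hx hy => by rw [map_mul, hx, hy, one_mul])
        (fun x _ hx => by rw [map_inv, hx, inv_one]) hg
    have := hγ ⟨finRotate p, Subgroup.mem_zpowers _⟩
    rw [htop] at this
    exact aux_finRotate_ne_one p hp3 (congrArg Subtype.val this).symm
  · rintro ⟨K, hK, hKH, hcomp⟩
    haveI := hK
    let π := QuotientGroup.mk' K
    have hexp : ∀ g : Equiv.Perm (Fin p), (π g) ^ p = 1 := by
      intro g
      obtain ⟨k, hk, h, hh, rfl⟩ := hcomp g
      have hk1 : π k = 1 := (QuotientGroup.eq_one_iff k).2 hk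
      rw [map_mul, hk1, one_mul, ← map_pow, hmem h hh, map_one]
    have hswap : ∀ σ : Equiv.Perm (Fin p), σ.IsSwap → σ ∈ K := by
      rintro σ ⟨a, b, hab, rfl⟩
      rw [← QuotientGroup.eq_one_iff]
      refine aux_eq_one_of_two_p p hodd _ ?_ (hexp _)
      show (π (Equiv.swap a b)) ^ 2 = 1
      rw [sq, ← map_mul, Equiv.swap_mul_self, map_one]
    have htop : ∀ g : Equiv.Perm (Fin p), g ∈ K := by
      intro g
      have hg : g ∈ Subgroup.closure {σ : Equiv.Perm (Fin p) | σ.IsSwap} := by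
        rw [Equiv.Perm.closure_isSwap]; trivial
      exact Subgroup.closure_induction (fun x hx => hswap x hx) K.one_mem
        (fun x y _ _ hx hy => K.mul_mem hx hy) (fun x _ hx => K.inv_mem hx) hg
    have hbot : finRotate p ∈ K ⊓ Subgroup.zpowers (finRotate p) :=
      ⟨htop _, Subgroup.mem_zpowers _⟩
    rw [hKH, Subgroup.mem_bot] at hbot
    exact aux_finRotate_ne_one p hp3 hbot
end

section
/- Let H be a finite group and φ₁, φ₂ : H → S_n two conjugate homomorphisms (φ₁ = q φ₂ q⁻¹ for some q ∈ S_n). Suppose d_H(φ₁(h), φ₂(h)) ≤ ε for all h ∈ H, where d_H is the normalized Hamming distance. Then there exists p ∈ S_n with φ₁ = p φ₂ p⁻¹ and d_H(p, 1) ≤ |H| · ε. -/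
/-- If `φ₁, φ₂ : H → S_n` are conjugate homomorphisms of a finite group `H` with
`d_H(φ₁(h), φ₂(h)) ≤ ε` for all `h ∈ H` (normalized Hamming distance), then there is a
conjugating permutation `p` with `d_H(p, 1) ≤ |H| · ε`. -/
theorem stmt_11 {H : Type*} [Group H] [Fintype H] {n : ℕ} (hn : 0 < n)
    (φ₁ φ₂ : H →* Equiv.Perm (Fin n)) (q : Equiv.Perm (Fin n))
    (hconj : ∀ h : H, φ₁ h = q * φ₂ h * q⁻¹) (ε : ℝ)
    (hclose : ∀ h : H,
      ((Finset.univ.filter fun i : Fin n => φ₁ h i ≠ φ₂ h i).card : ℝ) / n ≤ ε) :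
    ∃ p : Equiv.Perm (Fin n), (∀ h : H, φ₁ h = p * φ₂ h * p⁻¹) ∧
      ((Finset.univ.filter fun i : Fin n => p i ≠ i).card : ℝ) / n ≤
        (Fintype.card H : ℝ) * ε := by
  classical
  set A : Fin n → Prop := fun i => ∀ h : H, φ₁ h i = φ₂ h i with hA
  -- basic step from conjugacy
  have hstep : ∀ (h : H) (y : Fin n), q (φ₂ h y) = φ₁ h (q y) := by
    intro h y
    rw [hconj h]
    simp [Equiv.Perm.mul_apply]
  -- A is invariant under φ₂
  have hAinv2 : ∀ (h : H) (i : Fin n), A i → A (φ₂ h i) := by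
    intro h i hi g
    calc φ₁ g (φ₂ h i) = φ₁ g (φ₁ h i) := by rw [hi h]
      _ = φ₁ (g * h) i := by rw [map_mul]; rfl
      _ = φ₂ (g * h) i := hi (g * h)
      _ = φ₂ g (φ₂ h i) := by rw [map_mul]; rfl
  -- A is invariant under φ₁
  have hAinv1 : ∀ (h : H) (i : Fin n), A i → A (φ₁ h i) := by
    intro h i hi
    have : φ₁ h i = φ₂ h i := hi h
    rw [this]; exact hAinv2 h i hi
  -- complements are invariant
  have hAcinv2 : ∀ (h : H) (i : Fin n), ¬ A i → ¬ A (φ₂ h i) := by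
    intro h i hi hcon
    apply hi
    have := hAinv2 h⁻¹ _ hcon
    simpa using this
  have hAcinv1 : ∀ (h : H) (i : Fin n), ¬ A i → ¬ A (φ₁ h i) := by
    intro h i hi hcon
    apply hi
    have := hAinv1 h⁻¹ _ hcon
    simpa using this
  -- existence of a return time to the complement of A
  have ex : ∀ x : Fin n, ∃ k : ℕ, 0 < k ∧ (¬ A x → ¬ A ((q ^ k) x)) := by
    intro x
    refine ⟨orderOf q, orderOf_pos q, ?_⟩
    intro hx
    rw [pow_orderOf_eq_one q]
    simpa using hx
  set m : Fin n → ℕ := fun x => Nat.find (ex x) with hm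
  have hm_pos : ∀ x, 0 < m x := fun x => (Nat.find_spec (ex x)).1
  have hm_notA : ∀ x, ¬ A x → ¬ A ((q ^ m x) x) := fun x => (Nat.find_spec (ex x)).2
  have hm_min : ∀ x j, 0 < j → j < m x → ¬ A x → A ((q ^ j) x) := by
    intro x j hj hjm hx
    have h' := Nat.find_min (ex x) hjm
    push_neg at h'
    exact (h' hj).2
  -- equivariance of iterates while staying in A
  have hiter : ∀ (h : H) (x : Fin n) (k : ℕ), 0 < k →
      (∀ j, 0 < j → j < k → A ((q ^ j) x)) →
      (q ^ k) (φ₂ h x) = φ₁ h ((q ^ k) x) := by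
    intro h x k
    induction k with
    | zero => intro hk; exact absurd hk (lt_irrefl 0)
    | succ k ih =>
      intro _ hj
      rcases Nat.eq_zero_or_pos k with hk0 | hkpos
      · subst hk0
        simpa using hstep h x
      · have hkA : A ((q ^ k) x) := hj k hkpos (Nat.lt_succ_self k)
        have ihk := ih hkpos (fun j hj1 hj2 => hj j hj1 (hj2.trans (Nat.lt_succ_self k)))
        have e1 : (q ^ (k + 1)) (φ₂ h x) = q ((q ^ k) (φ₂ h x)) := by
          rw [pow_succ', Equiv.Perm.mul_apply]
        have e2 : (q ^ (k + 1)) x = q ((q ^ k) x) := by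
          rw [pow_succ', Equiv.Perm.mul_apply]
        rw [e1, e2, ihk, hkA h, hstep h ((q ^ k) x)]
  -- return times are equivariant
  have hm_eq : ∀ (h : H) (x : Fin n), ¬ A x → m (φ₂ h x) = m x := by
    intro h x hx
    have hmin : ∀ j, 0 < j → j < m x → A ((q ^ j) x) := fun j a b => hm_min x j a b hx
    have hle : m (φ₂ h x) ≤ m x := by
      apply Nat.find_le
      refine ⟨hm_pos x, fun _ => ?_⟩
      rw [hiter h x (m x) (hm_pos x) hmin]
      exact hAcinv1 h _ (hm_notA x hx)
    rcases lt_or_eq_of_le hle with hlt | heq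
    · exfalso
      have hx2 : ¬ A (φ₂ h x) := hAcinv2 h x hx
      have hnot := hm_notA (φ₂ h x) hx2
      have hpos := hm_pos (φ₂ h x)
      have heq2 : (q ^ m (φ₂ h x)) (φ₂ h x) = φ₁ h ((q ^ m (φ₂ h x)) x) :=
        hiter h x _ hpos (fun j a b => hmin j a (b.trans hlt))
      exact hnot (heq2 ▸ hAinv1 h _ (hmin _ hpos hlt))
    · exact heq
  -- the map
  set P : Fin n → Fin n := fun x => if A x then x else (q ^ m x) x with hP
  have hPA : ∀ x, A x → P x = x := by
    intro x hx; simp only [hP]; rw [if_pos hx]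
  have hPnA : ∀ x, ¬ A x → P x = (q ^ m x) x := by
    intro x hx; simp only [hP]; rw [if_neg hx]
  -- intertwining of P
  have hkey : ∀ (h : H) (x : Fin n), P (φ₂ h x) = φ₁ h (P x) := by
    intro h x
    by_cases hx : A x
    · rw [hPA x hx, hPA _ (hAinv2 h x hx), hx h]
    · rw [hPnA x hx, hPnA _ (hAcinv2 h x hx), hm_eq h x hx]
      exact hiter h x (m x) (hm_pos x) (fun j a b => hm_min x j a b hx)
  -- injectivity
  have hinj : Function.Injective P := by
    intro x y hxy
    by_cases hx : A x <;> by_cases hy : A y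
    · rwa [hPA x hx, hPA y hy] at hxy
    · exfalso
      rw [hPA x hx, hPnA y hy] at hxy
      exact hm_notA y hy (hxy ▸ hx)
    · exfalso
      rw [hPnA x hx, hPA y hy] at hxy
      exact hm_notA x hx (hxy.symm ▸ hy)
    · rw [hPnA x hx, hPnA y hy] at hxy
      -- wlog m x ≤ m y
      have key : ∀ a b : Fin n, ¬ A a → ¬ A b → m a ≤ m b →
          (q ^ m a) a = (q ^ m b) b → a = b := by
        intro a b ha hb hab heq
        have hd : (q ^ m b) b = (q ^ m a) ((q ^ (m b - m a)) b) := by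
          rw [← Equiv.Perm.mul_apply, ← pow_add]
          have hmm : m a + (m b - m a) = m b := by omega
          rw [hmm]
        rw [hd] at heq
        have heq2 : a = (q ^ (m b - m a)) b := (q ^ m a).injective heq
        rcases Nat.eq_zero_or_pos (m b - m a) with h0 | hpos
        · rw [h0] at heq2; simpa using heq2
        · exfalso
          have : A ((q ^ (m b - m a)) b) := by
            refine hm_min b _ hpos ?_ hb
            have := hm_pos a
            omega
          rw [← heq2] at this
          exact ha this
      rcases le_total (m x) (m y) with hle | hle
      · exact key x y hx hy hle hxy
      · exact (key y x hy hx hle hxy.symm).symm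
  have hbij : Function.Bijective P := Finite.injective_iff_bijective.mp hinj
  refine ⟨Equiv.ofBijective P hbij, ?_, ?_⟩
  · intro h
    apply Equiv.ext
    intro x
    simp only [Equiv.Perm.mul_apply]
    have h1 : Equiv.ofBijective P hbij (φ₂ h ((Equiv.ofBijective P hbij)⁻¹ x))
        = P (φ₂ h ((Equiv.ofBijective P hbij).symm x)) := rfl
    rw [h1, hkey h]
    have h2 : P ((Equiv.ofBijective P hbij).symm x)
        = Equiv.ofBijective P hbij ((Equiv.ofBijective P hbij).symm x) := rfl
    rw [h2, Equiv.apply_symm_apply]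
  · -- cardinality bound
    have hsub : (Finset.univ.filter fun i : Fin n => Equiv.ofBijective P hbij i ≠ i) ⊆
        Finset.univ.biUnion fun h : H =>
          Finset.univ.filter fun i : Fin n => φ₁ h i ≠ φ₂ h i := by
      intro i hi
      simp only [Finset.mem_filter, Finset.mem_univ, true_and] at hi
      have hiA : ¬ A i := by
        intro hAi
        exact hi (hPA i hAi)
      simp only [hA] at hiA
      push_neg at hiA
      obtain ⟨h, hh⟩ := hiA
      refine Finset.mem_biUnion.mpr ⟨h, Finset.mem_univ h, ?_⟩
      simp only [Finset.mem_filter, Finset.mem_univ, true_and]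
      exact hh
    have hcard : ((Finset.univ.filter fun i : Fin n => Equiv.ofBijective P hbij i ≠ i).card : ℝ)
        ≤ ∑ h : H, ((Finset.univ.filter fun i : Fin n => φ₁ h i ≠ φ₂ h i).card : ℝ) := by
      have h1 := Finset.card_le_card hsub
      have h2 := Finset.card_biUnion_le (s := (Finset.univ : Finset H))
        (t := fun h : H => Finset.univ.filter fun i : Fin n => φ₁ h i ≠ φ₂ h i)
      exact_mod_cast h1.trans h2
    have hnpos : (0 : ℝ) < n := by exact_mod_cast hn
    calc ((Finset.univ.filter fun i : Fin n => Equiv.ofBijective P hbij i ≠ i).card : ℝ) / n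
        ≤ (∑ h : H, ((Finset.univ.filter fun i : Fin n => φ₁ h i ≠ φ₂ h i).card : ℝ)) / n := by
          gcongr
      _ = ∑ h : H, ((Finset.univ.filter fun i : Fin n => φ₁ h i ≠ φ₂ h i).card : ℝ) / n := by
          rw [Finset.sum_div]
      _ ≤ ∑ _h : H, ε := Finset.sum_le_sum fun h _ => hclose h
      _ = (Fintype.card H : ℝ) * ε := by
          simp [Finset.sum_const, nsmul_eq_mul, Finset.card_univ]
end

section
/- Let G be a group and H a finite group acting on G by automorphisms; form G ⋊ H with projection φ : G ⋊ H → H. For any subgroup L ≤ G ⋊ H, setting L_e = L ∩ G and H₀ = φ(L), and choosing g_h ∈ L with φ(g_h) = h for each h ∈ H₀, one has L = ⋃_{h ∈ H₀} L_e · g_h. Consequently, if G has only countably many subgroups then G ⋊ H has only countably many subgroups. -/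
open SemidirectProduct

private lemma mem_iff_aux {G H : Type*} [Group G] [Group H]
    (φ : H →* MulAut G) (L : Subgroup (G ⋊[φ] H)) (s : H → G ⋊[φ] H)
    (hs : ∀ h ∈ Subgroup.map (rightHom : G ⋊[φ] H →* H) L,
      s h ∈ L ∧ rightHom (s h) = h) (x : G ⋊[φ] H) :
    x ∈ L ↔ ∃ h ∈ Subgroup.map (rightHom : G ⋊[φ] H →* H) L,
      ∃ y ∈ L ⊓ (rightHom : G ⋊[φ] H →* H).ker, x = y * s h := by
  constructor
  · intro hx
    have hm : rightHom x ∈ Subgroup.map (rightHom : G ⋊[φ] H →* H) L := ⟨x, hx, rfl⟩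
    obtain ⟨h1, h2⟩ := hs _ hm
    refine ⟨rightHom x, hm, x * (s (rightHom x))⁻¹,
      Subgroup.mem_inf.mpr ⟨mul_mem hx (inv_mem h1), ?_⟩, by group⟩
    rw [MonoidHom.mem_ker, map_mul, map_inv, h2, mul_inv_cancel]
  · rintro ⟨h, hm, y, hy, rfl⟩
    exact mul_mem (Subgroup.mem_inf.mp hy).1 (hs _ hm).1

private lemma countable_of_countable_subgroups {G : Type*} [Group G]
    (hG : Countable (Subgroup G)) : Countable G := by
  classical
  have hsurj : Function.Surjective
      (fun p : Subgroup G × ℤ =>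
        (if hc : ∃ c : G, Subgroup.zpowers c = p.1 then hc.choose else 1) ^ p.2) := by
    intro g
    have hc : ∃ c : G, Subgroup.zpowers c = Subgroup.zpowers g := ⟨g, rfl⟩
    have hspec := hc.choose_spec
    have hg : g ∈ Subgroup.zpowers hc.choose := by rw [hspec]; exact Subgroup.mem_zpowers g
    obtain ⟨n, hn⟩ := hg
    exact ⟨(Subgroup.zpowers g, n), by simpa [dif_pos hc] using hn⟩
  exact hsurj.countable

open Classical in
private noncomputable def rep {G H : Type*} [Group G] [Group H]
    (φ : H →* MulAut G) (L : Subgroup (G ⋊[φ] H)) (h : H) : G ⋊[φ] H :=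
  if hh : h ∈ Subgroup.map (rightHom : G ⋊[φ] H →* H) L then
    (Subgroup.mem_map.mp hh).choose else 1

private lemma rep_spec {G H : Type*} [Group G] [Group H]
    (φ : H →* MulAut G) (L : Subgroup (G ⋊[φ] H)) :
    ∀ h ∈ Subgroup.map (rightHom : G ⋊[φ] H →* H) L,
      rep φ L h ∈ L ∧ rightHom (rep φ L h) = h := by
  classical
  intro h hh
  rw [rep, dif_pos hh]
  exact (Subgroup.mem_map.mp hh).choose_spec

/-- For a group `G`, a finite group `H` acting on `G`, and a subgroup `L ≤ G ⋊ H`: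
setting `L_e = L ∩ G` (the kernel of the projection restricted to `L`) and
`H₀ = φ(L)`, and choosing `g_h ∈ L` with `φ(g_h) = h` for each `h ∈ H₀`, one has
`L = ⋃_{h ∈ H₀} L_e·g_h`. Consequently, if `G` has only countably many subgroups then
so does `G ⋊ H`. -/
theorem stmt_14 {G H : Type*} [Group G] [Group H] [Finite H]
    (φ : H →* MulAut G) (L : Subgroup (G ⋊[φ] H)) (s : H → G ⋊[φ] H)
    (hs : ∀ h ∈ Subgroup.map (rightHom : G ⋊[φ] H →* H) L,
      s h ∈ L ∧ rightHom (s h) = h) :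
    (∀ x : G ⋊[φ] H, x ∈ L ↔
      ∃ h ∈ Subgroup.map (rightHom : G ⋊[φ] H →* H) L,
        ∃ y ∈ L ⊓ (rightHom : G ⋊[φ] H →* H).ker, x = y * s h) ∧
    (Countable (Subgroup G) → Countable (Subgroup (G ⋊[φ] H))) := by
  refine ⟨mem_iff_aux φ L s hs, fun hG => ?_⟩
  have hGc : Countable G := countable_of_countable_subgroups hG
  have hSDc : Countable (G ⋊[φ] H) := by
    have hinj : Function.Injective
        (fun x : G ⋊[φ] H => (x.left, x.right)) := by
      intro a b hab
      exact SemidirectProduct.ext (congrArg Prod.fst hab) (congrArg Prod.snd hab)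
    exact hinj.countable
  set F : Subgroup (G ⋊[φ] H) → Subgroup G × Set H × (H → G ⋊[φ] H) :=
    fun K => ((K ⊓ (rightHom : G ⋊[φ] H →* H).ker).comap (inl : G →* G ⋊[φ] H),
      (Subgroup.map (rightHom : G ⋊[φ] H →* H) K : Set H), rep φ K) with hF
  have hFinj : Function.Injective F := by
    intro K₁ K₂ hK
    have h1 : (K₁ ⊓ (rightHom : G ⋊[φ] H →* H).ker).comap (inl : G →* G ⋊[φ] H)
        = (K₂ ⊓ (rightHom : G ⋊[φ] H →* H).ker).comap (inl : G →* G ⋊[φ] H) :=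
      congrArg Prod.fst hK
    have h2 : Subgroup.map (rightHom : G ⋊[φ] H →* H) K₁
        = Subgroup.map (rightHom : G ⋊[φ] H →* H) K₂ :=
      SetLike.coe_injective (congrArg (Prod.fst ∘ Prod.snd) hK)
    have h3 : rep φ K₁ = rep φ K₂ := congrArg (Prod.snd ∘ Prod.snd) hK
    have hker : ∀ K : Subgroup (G ⋊[φ] H),
        Subgroup.map (inl : G →* G ⋊[φ] H)
          ((K ⊓ (rightHom : G ⋊[φ] H →* H).ker).comap (inl : G →* G ⋊[φ] H))
        = K ⊓ (rightHom : G ⋊[φ] H →* H).ker := by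
      intro K
      apply Subgroup.map_comap_eq_self
      rw [MonoidHom.range_eq_map, ← range_inl_eq_ker_rightHom] at *
      exact le_trans inf_le_right (le_of_eq (MonoidHom.range_eq_map _))
    have h1' : K₁ ⊓ (rightHom : G ⋊[φ] H →* H).ker
        = K₂ ⊓ (rightHom : G ⋊[φ] H →* H).ker := by
      rw [← hker K₁, ← hker K₂, h1]
    ext x
    rw [mem_iff_aux φ K₁ (rep φ K₁) (rep_spec φ K₁) x,
      mem_iff_aux φ K₂ (rep φ K₂) (rep_spec φ K₂) x, h2, h1', h3]
  exact hFinj.countable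
end

section
/- Let G be a group in which every almost normal subgroup is profinitely closed (an intersection of finite-index subgroups of G), and let H be a finite group acting on G. Then every almost normal subgroup of G ⋊ H is profinitely closed in G ⋊ H. -/
/-!
Put `L₀ = L ∩ G`. Since `G` has finite index in `Γ = G ⋊ H`, `L₀` is almost normal in `G`, hence
`L₀ = ⋂ Kᵢ` with `Kᵢ` of finite index in `G`, hence in `Γ`. Let `Mᵢ` be the normal core of `Kᵢ`
in `Γ`. Each `Mᵢ L` is a finite-index subgroup of `Γ` containing `L`, and Dedekind's modular law
(`Mᵢ ≤ G`) gives `Mᵢ L ∩ G = Mᵢ L₀ ≤ Kᵢ`. So `X = ⋂ Mᵢ L` satisfies `X ∩ G ≤ L₀ ≤ L`, and every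
`x ∈ X ≤ M₀ L` is `m l` with `m = x l⁻¹ ∈ X ∩ M₀ ≤ L`; thus `X = L`.
-/

namespace Subgroup

variable {Γ : Type*} [Group Γ]

def IsAlmostNormal (L : Subgroup Γ) : Prop :=
  (normalizer (L : Set Γ)).FiniteIndex

def IsProfinitelyClosed (L : Subgroup Γ) : Prop :=
  ∃ K : ℕ → Subgroup Γ, (∀ i, (K i).FiniteIndex) ∧ L = ⨅ i, K i

theorem finiteIndex_comap {A : Type*} [Group A] (f : A →* Γ) (K : Subgroup Γ) [K.FiniteIndex] :
    (K.comap f).FiniteIndex :=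
  ⟨by rw [index_comap]; exact FiniteIndex.index_ne_zero⟩

theorem IsAlmostNormal.comap {A : Type*} [Group A] {L : Subgroup Γ} (hL : L.IsAlmostNormal)
    (f : A →* Γ) : (L.comap f).IsAlmostNormal := by
  have : (normalizer (L : Set Γ)).FiniteIndex := hL
  have := finiteIndex_comap f (normalizer (L : Set Γ))
  exact finiteIndex_of_le (le_normalizer_comap f)

theorem sup_inf_le_of_normal {M L N K : Subgroup Γ} [M.Normal] (hMN : M ≤ N) (hMK : M ≤ K)
    (hLN : L ⊓ N ≤ K) : (M ⊔ L) ⊓ N ≤ K := by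
  rintro x ⟨hx, hxN⟩
  obtain ⟨m, hm, l, hl, rfl⟩ := mem_sup_of_normal_left.mp hx
  have hlN : l ∈ N := by simpa using N.mul_mem (N.inv_mem (hMN hm)) hxN
  exact K.mul_mem (hMK hm) (hLN ⟨hl, hlN⟩)

theorem le_of_le_normal_sup {X M L : Subgroup Γ} [M.Normal] (hX : X ≤ M ⊔ L) (hLX : L ≤ X)
    (hXM : X ⊓ M ≤ L) : X ≤ L := by
  intro x hx
  obtain ⟨m, hm, l, hl, rfl⟩ := mem_sup_of_normal_left.mp (hX hx)
  have hmX : m ∈ X := by simpa using X.mul_mem hx (X.inv_mem (hLX hl))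
  exact L.mul_mem (hXM ⟨hmX, hm⟩) hl

theorem eq_iInf_normalCore_sup {ι : Type*} [Nonempty ι] {L N : Subgroup Γ} {K : ι → Subgroup Γ}
    (hKN : ∀ i, K i ≤ N) (hLN : L ⊓ N = ⨅ i, K i) :
    L = ⨅ i, ((K i).normalCore ⊔ L) := by
  set X := ⨅ i, ((K i).normalCore ⊔ L)
  have hLX : L ≤ X := le_iInf fun _ => le_sup_right
  have hXN : X ⊓ N ≤ L := calc
    X ⊓ N ≤ ⨅ i, K i := le_iInf fun i =>
      (inf_le_inf_right N (iInf_le _ i)).trans <|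
        sup_inf_le_of_normal ((normalCore_le _).trans (hKN i)) (normalCore_le _)
          (hLN ▸ iInf_le K i)
    _ = L ⊓ N := hLN.symm
    _ ≤ L := inf_le_left
  obtain ⟨i⟩ := ‹Nonempty ι›
  exact le_antisymm hLX <| le_of_le_normal_sup (iInf_le _ i) hLX
    ((inf_le_inf_left X ((normalCore_le _).trans (hKN i))).trans hXN)

theorem IsProfinitelyClosed.of_comap {A : Type*} [Group A] {f : A →* Γ}
    (hf : Function.Injective f) [f.range.FiniteIndex] {L : Subgroup Γ}
    (hL : (L.comap f).IsProfinitelyClosed) : L.IsProfinitelyClosed := by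
  obtain ⟨K, hK, hLK⟩ := hL
  have hKf : ∀ i, ((K i).map f).FiniteIndex := fun i =>
    ⟨by
      rw [index_map_of_injective _ hf]
      exact mul_ne_zero (hK i).index_ne_zero FiniteIndex.index_ne_zero⟩
  refine ⟨fun i => ((K i).map f).normalCore ⊔ L, fun i => finiteIndex_of_le le_sup_left, ?_⟩
  refine eq_iInf_normalCore_sup (N := f.range) (fun i => map_le_range f _) ?_
  rw [inf_comm, ← map_comap_eq, hLK, map_iInf f hf]

end Subgroup

/-- If every almost normal subgroup of `G` (i.e. one whose normalizer has finite index)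
is profinitely closed (an intersection of finite-index subgroups), and `H` is a finite
group acting on `G`, then every almost normal subgroup of `G ⋊ H` is profinitely
closed in `G ⋊ H`. -/
theorem stmt_15 {G H : Type*} [Group G] [Group H] [Finite H] (φ : H →* MulAut G)
    (hG : ∀ L : Subgroup G, (Subgroup.normalizer (L : Set G)).FiniteIndex →
      ∃ K : ℕ → Subgroup G, (∀ i, (K i).FiniteIndex) ∧ L = ⨅ i, K i)
    (L : Subgroup (G ⋊[φ] H)) (hL : (Subgroup.normalizer (L : Set (G ⋊[φ] H))).FiniteIndex) :
    ∃ K : ℕ → Subgroup (G ⋊[φ] H), (∀ i, (K i).FiniteIndex) ∧ L = ⨅ i, K i := by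
  have : (SemidirectProduct.inl : G →* G ⋊[φ] H).range.FiniteIndex := by
    rw [SemidirectProduct.range_inl_eq_ker_rightHom]
    infer_instance
  exact Subgroup.IsProfinitelyClosed.of_comap SemidirectProduct.inl_injective
    (hG _ (Subgroup.IsAlmostNormal.comap hL SemidirectProduct.inl))
end

section
/- Let G₁, G₂, Q be groups with Q acting on G₁ and G₂ by automorphisms, and H a common subgroup of G₁ and G₂ that is invariant under both actions with the actions agreeing on H. Then (G₁ *_H G₂) ⋊ Q ≅ (G₁ ⋊ Q) *_{H ⋊ Q} (G₂ ⋊ Q), where the Q-action on the amalgamated free product G₁ *_H G₂ is the one induced by the actions on the factors. -/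
open Monoid SemidirectProduct

/-- Let `Q` act on groups `G i` (`i : Bool`, the two free factors) and on their common
subgroup `H` (embedded via the injections `f i`), compatibly. Let `β` be the induced
`Q`-action on the amalgamated free product (pushout) `G₁ *_H G₂`, and let
`ψ i : H ⋊ Q →* G i ⋊ Q` be the induced maps. Then
`(G₁ *_H G₂) ⋊ Q ≅ (G₁ ⋊ Q) *_{H ⋊ Q} (G₂ ⋊ Q)`. -/
theorem stmt_16 {H Q : Type*} [Group H] [Group Q] {G : Bool → Type*}
    [∀ i, Group (G i)] (f : ∀ i, H →* G i) (hf : ∀ i, Function.Injective (f i))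
    (α : ∀ i, Q →* MulAut (G i)) (αH : Q →* MulAut H)
    (hcompat : ∀ i q h, f i (αH q h) = α i q (f i h))
    (β : Q →* MulAut (PushoutI f))
    (hβ : ∀ q i (g : G i), β q (PushoutI.of (φ := f) i g) = PushoutI.of (φ := f) i (α i q g))
    (ψ : ∀ i, (H ⋊[αH] Q) →* (G i ⋊[α i] Q))
    (hψl : ∀ i h, ψ i (inl h) = inl (f i h))
    (hψr : ∀ i q, ψ i (inr q) = inr q) :
    Nonempty ((PushoutI f ⋊[β] Q) ≃* PushoutI ψ) := by
  classical
  have key : ∀ (i : Bool) (q : Q),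
      PushoutI.base ψ (inr q) = PushoutI.of (φ := ψ) i (inr q) := fun i q => by
    rw [← hψr i q, PushoutI.of_apply_eq_base]
  -- the map on the normal subgroups
  have hF₁ : ∀ i, ((PushoutI.of (φ := ψ) i).comp (inl : G i →* G i ⋊[α i] Q)).comp (f i) =
      (PushoutI.base ψ).comp (inl : H →* H ⋊[αH] Q) := fun i => by
    ext h
    simp only [MonoidHom.comp_apply]
    rw [← hψl i h, PushoutI.of_apply_eq_base]
  set F₁ : PushoutI f →* PushoutI ψ :=
    PushoutI.lift (fun i => (PushoutI.of (φ := ψ) i).comp inl)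
      ((PushoutI.base ψ).comp inl) hF₁ with hF₁def
  -- the forward map
  set F : (PushoutI f ⋊[β] Q) →* PushoutI ψ :=
    SemidirectProduct.lift F₁ ((PushoutI.base ψ).comp inr) (fun q => by
      apply PushoutI.hom_ext_nonempty
      intro i
      ext g
      simp only [MonoidHom.comp_apply, MulEquiv.coe_toMonoidHom, MulAut.conj_apply,
        hβ q i g, hF₁def, PushoutI.lift_of, key i q]
      rw [← map_inv, ← map_mul, ← map_mul, ← map_inv (inr : Q →* G i ⋊[α i] Q) q]
      exact congrArg _ (inl_aut q g)) with hFdef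
  -- the maps on the factors for the backward map
  set Bmap : ∀ i, (G i ⋊[α i] Q) →* (PushoutI f ⋊[β] Q) := fun i =>
    SemidirectProduct.map (PushoutI.of (φ := f) i) (MonoidHom.id Q) (fun q => by
      ext g
      simp [hβ q i g]) with hBmapdef
  have hbase : ∀ (q : Q) (h : H), PushoutI.base f (αH q h) = β q (PushoutI.base f h) := by
    intro q h
    rw [← PushoutI.of_apply_eq_base f true, hcompat, ← hβ, PushoutI.of_apply_eq_base]
  set Bbase : (H ⋊[αH] Q) →* (PushoutI f ⋊[β] Q) :=
    SemidirectProduct.map (PushoutI.base f) (MonoidHom.id Q) (fun q => by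
      ext h
      simp [hbase q h]) with hBbasedef
  have hB : ∀ i, (Bmap i).comp (ψ i) = Bbase := fun i => by
    apply SemidirectProduct.hom_ext <;> ext x <;>
      simp [hBmapdef, hBbasedef, hψl, hψr, PushoutI.of_apply_eq_base]
  -- the backward map
  set B : PushoutI ψ →* (PushoutI f ⋊[β] Q) := PushoutI.lift Bmap Bbase hB with hBdef
  refine ⟨MonoidHom.toMulEquiv F B ?_ ?_⟩
  · apply SemidirectProduct.hom_ext
    · apply PushoutI.hom_ext_nonempty
      intro i
      refine MonoidHom.ext fun g => ?_
      show B (F (inl (PushoutI.of (φ := f) i g))) = inl (PushoutI.of (φ := f) i g)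
      rw [hFdef, SemidirectProduct.lift_inl, hF₁def, PushoutI.lift_of, MonoidHom.comp_apply,
        hBdef, PushoutI.lift_of, hBmapdef, SemidirectProduct.map_inl]
    · refine MonoidHom.ext fun q => ?_
      show B (F (inr q)) = inr q
      rw [hFdef, SemidirectProduct.lift_inr, MonoidHom.comp_apply, hBdef, PushoutI.lift_base,
        hBbasedef, SemidirectProduct.map_inr]
      rfl
  · apply PushoutI.hom_ext_nonempty
    intro i
    apply SemidirectProduct.hom_ext
    · refine MonoidHom.ext fun g => ?_
      show F (B (PushoutI.of (φ := ψ) i (inl g))) = PushoutI.of (φ := ψ) i (inl g)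
      rw [hBdef, PushoutI.lift_of, hBmapdef, SemidirectProduct.map_inl, hFdef,
        SemidirectProduct.lift_inl, hF₁def, PushoutI.lift_of]
      rfl
    · refine MonoidHom.ext fun q => ?_
      show F (B (PushoutI.of (φ := ψ) i (inr q))) = PushoutI.of (φ := ψ) i (inr q)
      rw [hBdef, PushoutI.lift_of, hBmapdef, SemidirectProduct.map_inr, hFdef,
        SemidirectProduct.lift_inr, MonoidHom.comp_apply, key i]
      rfl
end
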